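/- There is a constant C > 0 such that for every integer k ≥ 1 the series ∑_{l=1}^∞ (2l+k)^2 · c(l,k) converges and its sum is at most C (i.e., ∑_{l=1}^∞ (2l+k)^2 c(l,k) = O(1) uniformly in k). -/
import Mathlib

open scoped Classical

/-- The constants `c(l,k)`: `c(l,0) = c(0,k) = 0`,
`c(1,k) = (2k²+14k)/((k+1)(k+2)(k+3)(k+4))` for `k ≥ 1`, and for `l > 1`, `k > 0`,
`c(l,k) = c(l,k-1)·(l+k-1)/(2l+k+2) + c(l-1,k)·(l-1)/(2l+k+2)`. -/
noncomputable def c : ℕ → ℕ → ℝ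
  | _, 0 => 0
  | 0, _ => 0
  | 1, k + 1 =>
      (2 * ((k : ℝ) + 1) ^ 2 + 14 * ((k : ℝ) + 1)) /
        (((k : ℝ) + 2) * ((k : ℝ) + 3) * ((k : ℝ) + 4) * ((k : ℝ) + 5))
  | l + 2, k + 1 =>
      c (l + 2) k * ((l : ℝ) + (k : ℝ) + 2) / (2 * (l : ℝ) + (k : ℝ) + 7) +
      c (l + 1) (k + 1) * ((l : ℝ) + 1) / (2 * (l : ℝ) + (k : ℝ) + 7)
termination_by l k => (l, k)

/-- The coefficients `A l` of the supersolution. -/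
noncomputable def A : ℕ → ℝ
  | 0 => 24
  | 1 => 24
  | (m+2) => A (m+1) * (2*(m:ℝ)+7)/(2*(m:ℝ)+10)

theorem A_pos : ∀ l, 0 < A l := by
  intro l
  induction l using A.induct with
  | case1 => norm_num [A]
  | case2 => norm_num [A]
  | case3 m ih => rw [A]; positivity

/-- The supersolution `b(l,k) = A l · k(k+1)/((2l+k)(2l+k+1)(2l+k+2)(2l+k+3))`. -/
noncomputable def b (l k : ℕ) : ℝ :=
  A l * (k:ℝ) * ((k:ℝ)+1) /
    ((2*(l:ℝ)+(k:ℝ)) * (2*(l:ℝ)+(k:ℝ)+1) * (2*(l:ℝ)+(k:ℝ)+2) * (2*(l:ℝ)+(k:ℝ)+3))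

theorem key (x y A1 A2 : ℝ) (hx : 0 ≤ x) (hy : 0 ≤ y) (hA2 : 0 < A2)
    (hA : A2 * (2*x+10) = A1 * (2*x+7)) :
    A2 * y * (y+1) / ((2*x+y+4)*(2*x+y+5)*(2*x+y+6)*(2*x+y+7)) * (x+y+2) / (2*x+y+7)
    + A1 * (y+1) * (y+2) / ((2*x+y+3)*(2*x+y+4)*(2*x+y+5)*(2*x+y+6)) * (x+1) / (2*x+y+7)
    ≤ A2 * (y+1) * (y+2) / ((2*x+y+5)*(2*x+y+6)*(2*x+y+7)*(2*x+y+8)) := by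
  rw [← sub_nonneg]
  have h3 : (0:ℝ) < 2*x+y+3 := by linarith
  have h4 : (0:ℝ) < 2*x+y+4 := by linarith
  have h5 : (0:ℝ) < 2*x+y+5 := by linarith
  have h6 : (0:ℝ) < 2*x+y+6 := by linarith
  have h7 : (0:ℝ) < 2*x+y+7 := by linarith
  have h8 : (0:ℝ) < 2*x+y+8 := by linarith
  have h9 : (0:ℝ) < 2*x+7 := by linarith
  have hid : A2 * (y+1) * (y+2) / ((2*x+y+5)*(2*x+y+6)*(2*x+y+7)*(2*x+y+8))
      - (A2 * y * (y+1) / ((2*x+y+4)*(2*x+y+5)*(2*x+y+6)*(2*x+y+7)) * (x+y+2) / (2*x+y+7)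
        + A1 * (y+1) * (y+2) / ((2*x+y+3)*(2*x+y+4)*(2*x+y+5)*(2*x+y+6)) * (x+1) / (2*x+y+7))
      = A2 * (y+1) * (56 + 246*y + 131*y^2 + 11*y^3 + 100*x + 66*x*y + 31*x*y^2 + x*y^3
          + 248*x^2 + 14*x^2*y + 120*x^3 + 4*x^3*y + 16*x^4)
        / ((2*x+7)*(2*x+y+3)*(2*x+y+4)*(2*x+y+5)*(2*x+y+6)*(2*x+y+7)^2*(2*x+y+8)) := by
    have e1 : A1 = A2 * (2*x+10) / (2*x+7) := by field_simp; linarith [hA]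
    rw [e1]
    field_simp
    ring
  rw [hid]
  positivity

theorem c_nonneg : ∀ l k, 0 ≤ c l k := by
  intro l k
  induction l, k using c.induct with
  | case1 => simp [c]
  | case2 => simp [c]
  | case3 k => rw [c]; positivity
  | case4 l k ih1 ih2 => rw [c]; positivity

theorem c_le_b : ∀ l k, c l k ≤ b l k := by
  intro l k
  induction l, k using c.induct with
  | case1 l =>
    have : b l 0 = 0 := by simp [b]
    simp [c, this]
  | case2 k =>
    have h := A_pos 0
    simp only [c]
    unfold b
    positivity
  | case3 k =>
    rw [c]
    have hne2 : ((k:ℝ)+2) ≠ 0 := by positivity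
    have hne3 : ((k:ℝ)+3) ≠ 0 := by positivity
    have hne4 : ((k:ℝ)+4) ≠ 0 := by positivity
    have hne5 : ((k:ℝ)+5) ≠ 0 := by positivity
    have hne6 : ((k:ℝ)+6) ≠ 0 := by positivity
    rw [← sub_nonneg]
    have hid : b 1 (k+1) - (2 * ((k : ℝ) + 1) ^ 2 + 14 * ((k : ℝ) + 1)) /
        (((k : ℝ) + 2) * ((k : ℝ) + 3) * ((k : ℝ) + 4) * ((k : ℝ) + 5))
        = 2*((k:ℝ)+1)*(k:ℝ)*(11*(k:ℝ)+34) /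
          (((k:ℝ)+2)*((k:ℝ)+3)*((k:ℝ)+4)*((k:ℝ)+5)*((k:ℝ)+6)) := by
      unfold b
      have hA1 : A 1 = 24 := by norm_num [A]
      rw [hA1]
      push_cast
      field_simp
      ring
    rw [hid]
    positivity
  | case4 l k ih1 ih2 =>
    rw [c]
    have hx : (0:ℝ) ≤ (l:ℝ) := by positivity
    have hy : (0:ℝ) ≤ (k:ℝ) := by positivity
    have h7 : (0:ℝ) < 2*(l:ℝ)+(k:ℝ)+7 := by linarith
    have step1 : c (l + 2) k * ((l : ℝ) + (k : ℝ) + 2) / (2 * (l : ℝ) + (k : ℝ) + 7) +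
        c (l + 1) (k + 1) * ((l : ℝ) + 1) / (2 * (l : ℝ) + (k : ℝ) + 7)
        ≤ b (l + 2) k * ((l : ℝ) + (k : ℝ) + 2) / (2 * (l : ℝ) + (k : ℝ) + 7) +
        b (l + 1) (k + 1) * ((l : ℝ) + 1) / (2 * (l : ℝ) + (k : ℝ) + 7) := by
      have q1 : c (l + 2) k * ((l : ℝ) + (k : ℝ) + 2) ≤ b (l + 2) k * ((l : ℝ) + (k : ℝ) + 2) :=
        mul_le_mul_of_nonneg_right ih1 (by linarith)
      have q2 : c (l + 1) (k+1) * ((l : ℝ) + 1) ≤ b (l + 1) (k+1) * ((l : ℝ) + 1) :=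
        mul_le_mul_of_nonneg_right ih2 (by linarith)
      exact add_le_add ((div_le_div_iff_of_pos_right h7).mpr q1)
        ((div_le_div_iff_of_pos_right h7).mpr q2)
    refine step1.trans ?_
    have hb2k : b (l+2) k = A (l+2) * (k:ℝ) * ((k:ℝ)+1) /
        ((2*(l:ℝ)+(k:ℝ)+4)*(2*(l:ℝ)+(k:ℝ)+5)*(2*(l:ℝ)+(k:ℝ)+6)*(2*(l:ℝ)+(k:ℝ)+7)) := by
      unfold b; push_cast; ring_nf
    have hb1k : b (l+1) (k+1) = A (l+1) * ((k:ℝ)+1) * ((k:ℝ)+2) /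
        ((2*(l:ℝ)+(k:ℝ)+3)*(2*(l:ℝ)+(k:ℝ)+4)*(2*(l:ℝ)+(k:ℝ)+5)*(2*(l:ℝ)+(k:ℝ)+6)) := by
      unfold b; push_cast; ring_nf
    have hb2k1 : b (l+2) (k+1) = A (l+2) * ((k:ℝ)+1) * ((k:ℝ)+2) /
        ((2*(l:ℝ)+(k:ℝ)+5)*(2*(l:ℝ)+(k:ℝ)+6)*(2*(l:ℝ)+(k:ℝ)+7)*(2*(l:ℝ)+(k:ℝ)+8)) := by
      unfold b; push_cast; ring_nf
    rw [hb2k, hb1k, hb2k1]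
    have hA : A (l+2) * (2*(l:ℝ)+10) = A (l+1) * (2*(l:ℝ)+7) := by
      rw [A]
      have : (2*(l:ℝ)+10) ≠ 0 := by positivity
      field_simp
    have := key (l:ℝ) (k:ℝ) (A (l+1)) (A (l+2)) hx hy (A_pos (l+2)) hA
    convert this using 2

theorem A_step (m : ℕ) : A (m+2) * (((m:ℝ)+7) * Real.sqrt ((m:ℝ)+7)) ≤
    A (m+1) * (((m:ℝ)+6) * Real.sqrt ((m:ℝ)+6)) := by
  set x := (m:ℝ) with hxdef
  have hx : (0:ℝ) ≤ x := by positivity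
  set p := Real.sqrt (x+6) with hpdef
  set q := Real.sqrt (x+7) with hqdef
  have hp : 0 ≤ p := Real.sqrt_nonneg _
  have hq : 0 ≤ q := Real.sqrt_nonneg _
  have hp2 : p^2 = x+6 := Real.sq_sqrt (by linarith)
  have hq2 : q^2 = x+7 := Real.sq_sqrt (by linarith)
  rw [A]
  simp only [← hxdef]
  rw [div_mul_eq_mul_div, div_le_iff₀ (by positivity)]
  have hkey : (2*x+7) * ((x+7)*q) ≤ (2*x+10) * ((x+6)*p) := by
    have hsq : ((2*x+7) * ((x+7)*q))^2 ≤ ((2*x+10) * ((x+6)*p))^2 := by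
      have e1 : ((2*x+7) * ((x+7)*q))^2 = (2*x+7)^2*(x+7)^2*(x+7) := by
        rw [mul_pow, mul_pow, hq2]; ring
      have e2 : ((2*x+10) * ((x+6)*p))^2 = (2*x+10)^2*(x+6)^2*(x+6) := by
        rw [mul_pow, mul_pow, hp2]; ring
      rw [e1, e2]
      nlinarith [sq_nonneg x, mul_nonneg (mul_nonneg hx hx) hx]
    exact le_of_pow_le_pow_left₀ (by norm_num) (by positivity) hsq
  nlinarith [mul_le_mul_of_nonneg_left hkey (le_of_lt (A_pos (m+1)))]

theorem A_decay : ∀ m : ℕ, A (m+1) * (((m:ℝ)+6) * Real.sqrt ((m:ℝ)+6)) ≤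
    24 * (6 * Real.sqrt 6) := by
  intro m
  induction m with
  | zero => norm_num [A]
  | succ n ih =>
    have h := A_step n
    have e : ((n+1:ℕ):ℝ) + 6 = (n:ℝ)+7 := by push_cast; ring
    rw [e]
    exact h.trans ih

noncomputable def tf (l : ℕ) : ℝ := 1/Real.sqrt ((l:ℝ)+1) - 1/Real.sqrt ((l:ℝ)+2)

theorem tf_nonneg (l : ℕ) : 0 ≤ tf l := by
  unfold tf
  have h1 : (0:ℝ) < Real.sqrt ((l:ℝ)+1) := Real.sqrt_pos.mpr (by positivity)
  have h2 : Real.sqrt ((l:ℝ)+1) ≤ Real.sqrt ((l:ℝ)+2) := Real.sqrt_le_sqrt (by linarith)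
  have := one_div_le_one_div_of_le h1 h2
  linarith

theorem tf_summable : Summable tf := by
  apply summable_of_sum_range_le (c := 1) (fun n => tf_nonneg n)
  intro n
  have e : ∀ i : ℕ, tf i = (fun j : ℕ => 1/Real.sqrt ((j:ℝ)+1)) i
      - (fun j : ℕ => 1/Real.sqrt ((j:ℝ)+1)) (i+1) := by
    intro i
    unfold tf
    push_cast
    ring_nf
  rw [Finset.sum_congr rfl (fun i _ => e i), Finset.sum_range_sub']
  have e0 : (((0:ℕ):ℝ)+1) = 1 := by norm_num
  simp only [e0, Real.sqrt_one]
  have hpos : (0:ℝ) ≤ 1/Real.sqrt ((n:ℝ)+1) := by positivity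
  linarith

theorem A_le_tf (l : ℕ) : A (l+1) ≤ 288 * Real.sqrt 6 * tf l := by
  set u := Real.sqrt ((l:ℝ)+1) with hu
  set v := Real.sqrt ((l:ℝ)+2) with hv
  set w := Real.sqrt ((l:ℝ)+6) with hw
  have hup : 0 < u := Real.sqrt_pos.mpr (by positivity)
  have hvp : 0 < v := Real.sqrt_pos.mpr (by positivity)
  have hwp : 0 < w := Real.sqrt_pos.mpr (by positivity)
  have hu2 : u^2 = (l:ℝ)+1 := Real.sq_sqrt (by positivity)
  have hv2 : v^2 = (l:ℝ)+2 := Real.sq_sqrt (by positivity)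
  have hw2 : w^2 = (l:ℝ)+6 := Real.sq_sqrt (by positivity)
  have huv : u ≤ v := Real.sqrt_le_sqrt (by linarith)
  have hvw : v ≤ w := Real.sqrt_le_sqrt (by linarith)
  have hAd := A_decay l
  have hA1 : A (l+1) ≤ 144 * (6:ℝ).sqrt / (((l:ℝ)+6) * w) := by
    rw [le_div_iff₀ (by positivity)]
    calc A (l+1) * (((l:ℝ)+6) * w) ≤ 24 * (6 * Real.sqrt 6) := hAd
      _ = 144 * (6:ℝ).sqrt := by ring
  refine hA1.trans ?_
  have hmain : 1/(2*(w*w*w)) ≤ 1/u - 1/v := by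
    have hsum : 0 < u*v*(u+v) := by positivity
    have hid : 1/u - 1/v = 1/(u*v*(u+v)) := by
      rw [div_sub_div _ _ (ne_of_gt hup) (ne_of_gt hvp)]
      rw [div_eq_div_iff (by positivity) (ne_of_gt hsum)]
      nlinarith [hu2, hv2]
    rw [hid]
    apply one_div_le_one_div_of_le (by positivity)
    nlinarith [mul_le_mul_of_nonneg_left hvw (le_of_lt hup), hup.le, hvp.le, hwp.le,
      mul_le_mul_of_nonneg_right huv hvp.le, mul_le_mul_of_nonneg_right hvw hwp.le]
  unfold tf
  rw [← hu, ← hv]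
  have e : ((l:ℝ)+6) * w = w*w*w := by nlinarith [hw2]
  rw [e]
  calc 144 * (6:ℝ).sqrt / (w*w*w) = 288 * (6:ℝ).sqrt * (1/(2*(w*w*w))) := by
        field_simp; ring
    _ ≤ 288 * (6:ℝ).sqrt * (1/u - 1/v) := by
        exact mul_le_mul_of_nonneg_left hmain (by positivity)

theorem weighted_le_A (l k : ℕ) :
    (2 * ((l : ℝ) + 1) + (k : ℝ)) ^ 2 * c (l + 1) k ≤ A (l+1) := by
  have h1 : (2 * ((l : ℝ) + 1) + (k : ℝ)) ^ 2 * c (l + 1) k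
      ≤ (2 * ((l : ℝ) + 1) + (k : ℝ)) ^ 2 * b (l + 1) k :=
    mul_le_mul_of_nonneg_left (c_le_b (l+1) k) (by positivity)
  refine h1.trans ?_
  have hb : b (l+1) k = A (l+1) * (k:ℝ) * ((k:ℝ)+1) /
      ((2*(l:ℝ)+(k:ℝ)+2)*(2*(l:ℝ)+(k:ℝ)+3)*(2*(l:ℝ)+(k:ℝ)+4)*(2*(l:ℝ)+(k:ℝ)+5)) := by
    unfold b; push_cast; ring_nf
  rw [hb]
  have hD : (0:ℝ) < (2*(l:ℝ)+(k:ℝ)+2)*(2*(l:ℝ)+(k:ℝ)+3)*(2*(l:ℝ)+(k:ℝ)+4)*(2*(l:ℝ)+(k:ℝ)+5) := by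
    positivity
  rw [mul_div_assoc', div_le_iff₀ hD]
  have hpoly : (2 * ((l:ℝ) + 1) + (k:ℝ))^2 * ((k:ℝ) * ((k:ℝ)+1))
      ≤ (2*(l:ℝ)+(k:ℝ)+2)*(2*(l:ℝ)+(k:ℝ)+3)*(2*(l:ℝ)+(k:ℝ)+4)*(2*(l:ℝ)+(k:ℝ)+5) := by
    have hexp : (2*(l:ℝ)+(k:ℝ)+2)*(2*(l:ℝ)+(k:ℝ)+3)*(2*(l:ℝ)+(k:ℝ)+4)*(2*(l:ℝ)+(k:ℝ)+5)
        - (2 * ((l:ℝ) + 1) + (k:ℝ))^2 * ((k:ℝ) * ((k:ℝ)+1))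
        = 120 + 150*(k:ℝ) + 63*(k:ℝ)^2 + 9*(k:ℝ)^3 + 308*(l:ℝ) + 276*(l:ℝ)*(k:ℝ)
          + 72*(l:ℝ)*(k:ℝ)^2 + 4*(l:ℝ)*(k:ℝ)^3 + 284*(l:ℝ)^2 + 164*(l:ℝ)^2*(k:ℝ)
          + 20*(l:ℝ)^2*(k:ℝ)^2 + 112*(l:ℝ)^3 + 32*(l:ℝ)^3*(k:ℝ) + 16*(l:ℝ)^4 := by
      ring
    rw [← sub_nonneg, hexp]
    positivity
  calc (2 * ((l:ℝ) + 1) + (k:ℝ))^2 * (A (l+1) * (k:ℝ) * ((k:ℝ)+1))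
      = A (l+1) * ((2 * ((l:ℝ) + 1) + (k:ℝ))^2 * ((k:ℝ) * ((k:ℝ)+1))) := by ring
    _ ≤ A (l+1) * ((2*(l:ℝ)+(k:ℝ)+2)*(2*(l:ℝ)+(k:ℝ)+3)*(2*(l:ℝ)+(k:ℝ)+4)*(2*(l:ℝ)+(k:ℝ)+5)) :=
        mul_le_mul_of_nonneg_left hpoly (A_pos (l+1)).le

/-- There is `C > 0` such that for every `k ≥ 1` the series `∑_{l=1}^∞ (2l+k)²·c(l,k)`
converges and its sum is at most `C`. -/
theorem weighted_sum_bounded :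
    ∃ C : ℝ, 0 < C ∧ ∀ k : ℕ, 1 ≤ k →
      Summable (fun l : ℕ => (2 * ((l : ℝ) + 1) + (k : ℝ)) ^ 2 * c (l + 1) k) ∧
      (∑' l : ℕ, (2 * ((l : ℝ) + 1) + (k : ℝ)) ^ 2 * c (l + 1) k) ≤ C := by
  have hg_summable : Summable (fun l : ℕ => 288 * Real.sqrt 6 * tf l) :=
    tf_summable.mul_left _
  refine ⟨1 + ∑' l : ℕ, 288 * Real.sqrt 6 * tf l, ?_, ?_⟩
  · have : 0 ≤ ∑' l : ℕ, 288 * Real.sqrt 6 * tf l :=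
      tsum_nonneg (fun l => mul_nonneg (by positivity) (tf_nonneg l))
    linarith
  · intro k _
    have hle : ∀ l : ℕ, (2 * ((l : ℝ) + 1) + (k : ℝ)) ^ 2 * c (l + 1) k
        ≤ 288 * Real.sqrt 6 * tf l :=
      fun l => (weighted_le_A l k).trans (A_le_tf l)
    have hnn : ∀ l : ℕ, 0 ≤ (2 * ((l : ℝ) + 1) + (k : ℝ)) ^ 2 * c (l + 1) k :=
      fun l => mul_nonneg (by positivity) (c_nonneg (l+1) k)
    have hsummable : Summable (fun l : ℕ => (2 * ((l : ℝ) + 1) + (k : ℝ)) ^ 2 * c (l + 1) k) :=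
      Summable.of_nonneg_of_le hnn hle hg_summable
    refine ⟨hsummable, ?_⟩
    have := Summable.tsum_le_tsum hle hsummable hg_summable
    have h0 : (0:ℝ) ≤ ∑' l : ℕ, 288 * Real.sqrt 6 * tf l :=
      tsum_nonneg (fun l => mul_nonneg (by positivity) (tf_nonneg l))
    linarith
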